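/- On ℝ³∖{0} restricted to z ≠ 0, let D(x,y,z) = z^{−2} and let ℒ* be the Fokker–Planck operator of the Itô system with drift b(x,y,z) = (12(2z−1)xz − x/2, −y/2, −12zx²) and diffusion σ(x,y,z) = ((1−2z)x, (1−2z)y, 2(1−z)z) driven by one Brownian motion. Then ℒ*D(x,y,z) = −12x²/z², which is < 0 whenever x ≠ 0. -/
import Mathlib

open MeasureTheory Filter Set

/-- Diffusion coefficients of Example 2. -/
def sig1 (x y z : ℝ) : ℝ := (1 - 2 * z) * x
def sig2 (x y z : ℝ) : ℝ := (1 - 2 * z) * y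
def sig3 (x y z : ℝ) : ℝ := 2 * (1 - z) * z
/-- Drift coefficients of Example 2. -/
noncomputable def bb1 (x y z : ℝ) : ℝ := 12 * (2 * z - 1) * x * z - x / 2
noncomputable def bb2 (x y z : ℝ) : ℝ := -(y / 2)
def bb3 (x y z : ℝ) : ℝ := -(12 * z * x ^ 2)
/-- The density `D(x,y,z) = z^{-2}` of Example 2. -/
noncomputable def Dex2 (x y z : ℝ) : ℝ := (z ^ 2)⁻¹

lemma dlin (C t : ℝ) : deriv (fun s : ℝ => C * s) t = C := by
  simpa using ((hasDerivAt_id t).const_mul C).deriv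

lemma dsq (C t : ℝ) : deriv (fun s : ℝ => C * s ^ 2) t = 2 * C * t := by
  have h : HasDerivAt (fun s : ℝ => C * s ^ 2) (C * (2 * t ^ 1)) t := by
    simpa using (hasDerivAt_pow 2 t).const_mul C
  rw [h.deriv]; ring

lemma dinv (A B E z : ℝ) (hz : z ≠ 0) :
    deriv (fun c : ℝ => A * c⁻¹ + (B + E * c)) z = -(A * (z ^ 2)⁻¹) + E := by
  have h : HasDerivAt (fun c : ℝ => A * c⁻¹ + (B + E * c))
      (A * (-(z ^ 2)⁻¹) + (0 + E * 1)) z :=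
    (((hasDerivAt_inv hz).const_mul A).add
      ((hasDerivAt_const z B).add ((hasDerivAt_id z).const_mul E)))
  rw [h.deriv]; ring

lemma deriv_congr_ne (f g : ℝ → ℝ) (z : ℝ) (hz : z ≠ 0)
    (h : ∀ c, c ≠ 0 → f c = g c) : deriv f z = deriv g z := by
  apply Filter.EventuallyEq.deriv_eq
  filter_upwards [isOpen_ne.mem_nhds hz] with c hc using h c hc

lemma dpoly (t : ℝ) : deriv (fun s : ℝ => 4 - 8 * s + 4 * s ^ 2) t = -8 + 8 * t := by
  have h : HasDerivAt (fun s : ℝ => 4 - 8 * s + 4 * s ^ 2)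
      ((0 - 8 * 1) + 4 * (2 * t ^ 1)) t :=
    ((hasDerivAt_const t 4).sub ((hasDerivAt_id t).const_mul 8)).add
      ((hasDerivAt_pow 2 t).const_mul 4)
  rw [h.deriv]; ring

lemma dlinadd (B E t : ℝ) : deriv (fun s : ℝ => B + E * s) t = E := by
  have h : HasDerivAt (fun s : ℝ => B + E * s) (0 + E * 1) t :=
    (hasDerivAt_const t B).add ((hasDerivAt_id t).const_mul E)
  rw [h.deriv]; ring

/-- For the system of Example 2 and `D = z^{-2}`, the Fokker–Planck
operator gives `ℒ*D = −12x²/z²` (for `z ≠ 0`), which is `< 0` whenever `x ≠ 0`. -/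
theorem example2_fokker_planck (x y z : ℝ) (hz : z ≠ 0) :
    ((1/2 : ℝ) *
        (deriv (fun a => deriv (fun a' => sig1 a' y z * sig1 a' y z * Dex2 a' y z) a) x
          + deriv (fun a => deriv (fun b => sig1 a b z * sig2 a b z * Dex2 a b z) y) x
          + deriv (fun a => deriv (fun c => sig1 a y c * sig3 a y c * Dex2 a y c) z) x
          + deriv (fun b => deriv (fun a => sig2 a b z * sig1 a b z * Dex2 a b z) x) y
          + deriv (fun b => deriv (fun b' => sig2 x b' z * sig2 x b' z * Dex2 x b' z) b) y
          + deriv (fun b => deriv (fun c => sig2 x b c * sig3 x b c * Dex2 x b c) z) y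
          + deriv (fun c => deriv (fun a => sig3 a y c * sig1 a y c * Dex2 a y c) x) z
          + deriv (fun c => deriv (fun b => sig3 x b c * sig2 x b c * Dex2 x b c) y) z
          + deriv (fun c => deriv (fun c' => sig3 x y c' * sig3 x y c' * Dex2 x y c') c) z)
      - deriv (fun a => bb1 a y z * Dex2 a y z) x
      - deriv (fun b => bb2 x b z * Dex2 x b z) y
      - deriv (fun c => bb3 x y c * Dex2 x y c) z
      = -12 * x ^ 2 / z ^ 2) ∧
    (x ≠ 0 → -12 * x ^ 2 / z ^ 2 < 0) := by
  constructor
  · -- term (x,x)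
    have e1 : deriv (fun a => deriv (fun a' => sig1 a' y z * sig1 a' y z * Dex2 a' y z) a) x
        = 2 * ((1 - 2 * z) ^ 2 * (z ^ 2)⁻¹) := by
      have hin : (fun a => deriv (fun a' => sig1 a' y z * sig1 a' y z * Dex2 a' y z) a)
          = fun a : ℝ => 2 * ((1 - 2 * z) ^ 2 * (z ^ 2)⁻¹) * a := by
        funext a
        have h2 : (fun a' => sig1 a' y z * sig1 a' y z * Dex2 a' y z)
            = fun a' : ℝ => ((1 - 2 * z) ^ 2 * (z ^ 2)⁻¹) * a' ^ 2 := by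
          funext a'; simp only [sig1, Dex2]; ring
        rw [h2, dsq]
      rw [hin, dlin]
    -- term (x,y)
    have e2 : deriv (fun a => deriv (fun b => sig1 a b z * sig2 a b z * Dex2 a b z) y) x
        = (1 - 2 * z) ^ 2 * (z ^ 2)⁻¹ := by
      have hin : (fun a => deriv (fun b => sig1 a b z * sig2 a b z * Dex2 a b z) y)
          = fun a : ℝ => ((1 - 2 * z) ^ 2 * (z ^ 2)⁻¹) * a := by
        funext a
        have h2 : (fun b => sig1 a b z * sig2 a b z * Dex2 a b z)
            = fun b : ℝ => (((1 - 2 * z) ^ 2 * (z ^ 2)⁻¹) * a) * b := by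
          funext b; simp only [sig1, sig2, Dex2]; ring
        rw [h2, dlin]
      rw [hin, dlin]
    -- term (x,z)
    have e3 : deriv (fun a => deriv (fun c => sig1 a y c * sig3 a y c * Dex2 a y c) z) x
        = -(2 * (z ^ 2)⁻¹) + 4 := by
      have hin : (fun a => deriv (fun c => sig1 a y c * sig3 a y c * Dex2 a y c) z)
          = fun a : ℝ => (-(2 * (z ^ 2)⁻¹) + 4) * a := by
        funext a
        rw [deriv_congr_ne _ (fun c : ℝ => (2 * a) * c⁻¹ + (-6 * a + (4 * a) * c)) z hz
          (by intro c hc; simp only [sig1, sig3, Dex2]; field_simp; ring), dinv _ _ _ _ hz]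
        ring
      rw [hin, dlin]
    -- term (y,x)
    have e4 : deriv (fun b => deriv (fun a => sig2 a b z * sig1 a b z * Dex2 a b z) x) y
        = (1 - 2 * z) ^ 2 * (z ^ 2)⁻¹ := by
      have hin : (fun b => deriv (fun a => sig2 a b z * sig1 a b z * Dex2 a b z) x)
          = fun b : ℝ => ((1 - 2 * z) ^ 2 * (z ^ 2)⁻¹) * b := by
        funext b
        have h2 : (fun a => sig2 a b z * sig1 a b z * Dex2 a b z)
            = fun a : ℝ => (((1 - 2 * z) ^ 2 * (z ^ 2)⁻¹) * b) * a := by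
          funext a; simp only [sig1, sig2, Dex2]; ring
        rw [h2, dlin]
      rw [hin, dlin]
    -- term (y,y)
    have e5 : deriv (fun b => deriv (fun b' => sig2 x b' z * sig2 x b' z * Dex2 x b' z) b) y
        = 2 * ((1 - 2 * z) ^ 2 * (z ^ 2)⁻¹) := by
      have hin : (fun b => deriv (fun b' => sig2 x b' z * sig2 x b' z * Dex2 x b' z) b)
          = fun b : ℝ => 2 * ((1 - 2 * z) ^ 2 * (z ^ 2)⁻¹) * b := by
        funext b
        have h2 : (fun b' => sig2 x b' z * sig2 x b' z * Dex2 x b' z)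
            = fun b' : ℝ => ((1 - 2 * z) ^ 2 * (z ^ 2)⁻¹) * b' ^ 2 := by
          funext b'; simp only [sig2, Dex2]; ring
        rw [h2, dsq]
      rw [hin, dlin]
    -- term (y,z)
    have e6 : deriv (fun b => deriv (fun c => sig2 x b c * sig3 x b c * Dex2 x b c) z) y
        = -(2 * (z ^ 2)⁻¹) + 4 := by
      have hin : (fun b => deriv (fun c => sig2 x b c * sig3 x b c * Dex2 x b c) z)
          = fun b : ℝ => (-(2 * (z ^ 2)⁻¹) + 4) * b := by
        funext b
        rw [deriv_congr_ne _ (fun c : ℝ => (2 * b) * c⁻¹ + (-6 * b + (4 * b) * c)) z hz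
          (by intro c hc; simp only [sig2, sig3, Dex2]; field_simp; ring), dinv _ _ _ _ hz]
        ring
      rw [hin, dlin]
    -- term (z,x)
    have e7 : deriv (fun c => deriv (fun a => sig3 a y c * sig1 a y c * Dex2 a y c) x) z
        = -(2 * (z ^ 2)⁻¹) + 4 := by
      have hin : (fun c => deriv (fun a => sig3 a y c * sig1 a y c * Dex2 a y c) x)
          = fun c : ℝ => 2 * (1 - c) * c * (1 - 2 * c) * (c ^ 2)⁻¹ := by
        funext c
        have h2 : (fun a => sig3 a y c * sig1 a y c * Dex2 a y c)
            = fun a : ℝ => (2 * (1 - c) * c * (1 - 2 * c) * (c ^ 2)⁻¹) * a := by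
          funext a; simp only [sig1, sig3, Dex2]; ring
        rw [h2, dlin]
      rw [hin, deriv_congr_ne _ (fun c : ℝ => 2 * c⁻¹ + (-6 + 4 * c)) z hz
        (by intro c hc; field_simp; ring), dinv _ _ _ _ hz]
    -- term (z,y)
    have e8 : deriv (fun c => deriv (fun b => sig3 x b c * sig2 x b c * Dex2 x b c) y) z
        = -(2 * (z ^ 2)⁻¹) + 4 := by
      have hin : (fun c => deriv (fun b => sig3 x b c * sig2 x b c * Dex2 x b c) y)
          = fun c : ℝ => 2 * (1 - c) * c * (1 - 2 * c) * (c ^ 2)⁻¹ := by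
        funext c
        have h2 : (fun b => sig3 x b c * sig2 x b c * Dex2 x b c)
            = fun b : ℝ => (2 * (1 - c) * c * (1 - 2 * c) * (c ^ 2)⁻¹) * b := by
          funext b; simp only [sig2, sig3, Dex2]; ring
        rw [h2, dlin]
      rw [hin, deriv_congr_ne _ (fun c : ℝ => 2 * c⁻¹ + (-6 + 4 * c)) z hz
        (by intro c hc; field_simp; ring), dinv _ _ _ _ hz]
    -- term (z,z)
    have e9 : deriv (fun c => deriv (fun c' => sig3 x y c' * sig3 x y c' * Dex2 x y c') c) z
        = 8 := by
      rw [deriv_congr_ne _ (fun c : ℝ => -8 + 8 * c) z hz ?_, dlinadd]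
      intro c hc
      rw [deriv_congr_ne _ (fun c' : ℝ => 4 - 8 * c' + 4 * c' ^ 2) c hc
        (by intro c' hc'; simp only [sig3, Dex2]; field_simp; ring), dpoly]
    -- drift terms
    have e10 : deriv (fun a => bb1 a y z * Dex2 a y z) x
        = (12 * (2 * z - 1) * z - 1 / 2) * (z ^ 2)⁻¹ := by
      have h2 : (fun a => bb1 a y z * Dex2 a y z)
          = fun a : ℝ => ((12 * (2 * z - 1) * z - 1 / 2) * (z ^ 2)⁻¹) * a := by
        funext a; simp only [bb1, Dex2]; ring
      rw [h2, dlin]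
    have e11 : deriv (fun b => bb2 x b z * Dex2 x b z) y = -(1 / 2) * (z ^ 2)⁻¹ := by
      have h2 : (fun b => bb2 x b z * Dex2 x b z)
          = fun b : ℝ => (-(1 / 2) * (z ^ 2)⁻¹) * b := by
        funext b; simp only [bb2, Dex2]; ring
      rw [h2, dlin]
    have e12 : deriv (fun c => bb3 x y c * Dex2 x y c) z = 12 * x ^ 2 * (z ^ 2)⁻¹ := by
      rw [deriv_congr_ne _ (fun c : ℝ => (-(12 * x ^ 2)) * c⁻¹ + (0 + 0 * c)) z hz
        (by intro c hc; simp only [bb3, Dex2]; field_simp; ring), dinv _ _ _ _ hz]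
      ring
    rw [e1, e2, e3, e4, e5, e6, e7, e8, e9, e10, e11, e12]
    field_simp
    ring
  · intro hx
    have h1 : 0 < x ^ 2 := by positivity
    have h2 : 0 < z ^ 2 := by positivity
    have : -12 * x ^ 2 < 0 := by nlinarith
    exact div_neg_of_neg_of_pos this h2
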